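/- arXiv:2412.05651 — 2 statements merged into one kernel-verified Lean document; each statement's English description precedes it below -/
import Mathlib

section
/- Let S̄ be an N×N real symmetric matrix and, for k = 1,…,K, let Ḡ_{k−1} be N×N real positive semidefinite matrices with strictly positive diagonal entries, and let σ_{k−1} > 0 be reals. For diagonal matrices D_{k−1} = diag(α_{1,k−1},…,α_{N,k−1}), define the total mitigation J(Θ) = Σ_{k=1}^{K} (σ_{k−1}²/N)·( tr(Ḡ_{k−1} D_{k−1}²) − 2 tr(Ḡ_{k−1} S̄ D_{k−1}) ), where Θ = (α_{i,k−1}). Then J is minimized over all Θ ∈ ℝ^{N×K} exactly when α_{i,k−1} = [Ḡ_{k−1} S̄]_{ii} / [Ḡ_{k−1}]_{ii} for all i, k, and the minimum value equals −I(Θ*) where I(Θ*) = Σ_{k=1}^{K} (σ_{k−1}²/N) Σ_{i=1}^{N} [Ḡ_{k−1} S̄]_{ii}² / [Ḡ_{k−1}]_{ii}. (In the stochastic FIR setting Ḡ_{k−1} = E[G_{k−1}] is the expected Gram matrix of the stochastic sub graph filter and S̄ the expected graph shift operator.) -/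
open Matrix

lemma tr_mul_diag {N : ℕ} (A : Matrix (Fin N) (Fin N) ℝ) (d : Fin N → ℝ) :
    (A * Matrix.diagonal d).trace = ∑ i, A i i * d i := by
  simp [Matrix.trace, Matrix.mul_apply, Matrix.diagonal, Matrix.diag]

/-- Theorem 3, stochastic FIR: closed-form error weights.
With `Ḡ_{k−1}` the expected Gram matrices (positive semidefinite, strictly positive
diagonal) and `S̄` the expected graph shift operator, the total mitigation
`J(Θ) = Σ_k (σ_{k−1}²/N)( tr(Ḡ_{k−1} D_{k−1}²) − 2 tr(Ḡ_{k−1} S̄ D_{k−1}) )`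
is minimized exactly at `α_{i,k−1} = [Ḡ_{k−1} S̄]_{ii} / [Ḡ_{k−1}]_{ii}`, with minimum
value `−I(Θ*)`. -/
theorem stmt8 {N K : ℕ} (hN : 0 < N) (hK : 0 < K)
    (Sbar : Matrix (Fin N) (Fin N) ℝ) (hSbar : Sbar.IsSymm)
    (G : Fin K → Matrix (Fin N) (Fin N) ℝ)
    (hG : ∀ k, (G k).PosSemidef) (hGd : ∀ k i, 0 < G k i i)
    (σ : Fin K → ℝ) (hσ : ∀ k, 0 < σ k)
    (J : (Fin K → Fin N → ℝ) → ℝ)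
    (hJ : ∀ Θ : Fin K → Fin N → ℝ, J Θ = ∑ k, ((σ k) ^ 2 / N) *
      ((G k * (Matrix.diagonal (Θ k)) ^ 2).trace
        - 2 * (G k * Sbar * Matrix.diagonal (Θ k)).trace))
    (Θstar : Fin K → Fin N → ℝ)
    (hΘstar : ∀ k i, Θstar k i = (G k * Sbar) i i / G k i i) :
    (∀ Θ : Fin K → Fin N → ℝ, Θ ≠ Θstar → J Θstar < J Θ) ∧
      J Θstar = -(∑ k, ((σ k) ^ 2 / N) * ∑ i, ((G k * Sbar) i i) ^ 2 / G k i i) := by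
  set c : Fin K → ℝ := fun k => (σ k) ^ 2 / N with hc
  have hcpos : ∀ k, 0 < c k := fun k =>
    div_pos (pow_pos (hσ k) 2) (by exact_mod_cast hN)
  -- rewrite J in coordinates
  have hJ' : ∀ Θ : Fin K → Fin N → ℝ, J Θ =
      ∑ k, c k * ∑ i, (G k i i * (Θ k i) ^ 2 - 2 * (G k * Sbar) i i * Θ k i) := by
    intro Θ
    rw [hJ]
    refine Finset.sum_congr rfl fun k _ => ?_
    have h1 : (Matrix.diagonal (Θ k)) ^ 2 = Matrix.diagonal (fun i => (Θ k i) ^ 2) := by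
      rw [sq, Matrix.diagonal_mul_diagonal]
      congr 1; funext i; ring
    rw [h1, tr_mul_diag, tr_mul_diag, Finset.mul_sum, ← Finset.sum_sub_distrib]
    congr 1
    exact Finset.sum_congr rfl fun i _ => by ring
  -- key pointwise identity
  have key : ∀ k (a : ℝ) (i : Fin N),
      G k i i * a ^ 2 - 2 * (G k * Sbar) i i * a
        = G k i i * (a - Θstar k i) ^ 2 - ((G k * Sbar) i i) ^ 2 / G k i i := by
    intro k a i
    have hg : G k i i ≠ 0 := (hGd k i).ne'
    rw [hΘstar]
    field_simp
    ring
  have hJstar : J Θstar = -(∑ k, c k * ∑ i, ((G k * Sbar) i i) ^ 2 / G k i i) := by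
    rw [hJ' Θstar, ← Finset.sum_neg_distrib]
    refine Finset.sum_congr rfl fun k _ => ?_
    rw [← mul_neg, ← Finset.sum_neg_distrib]
    congr 1
    refine Finset.sum_congr rfl fun i _ => ?_
    rw [key k (Θstar k i) i]; ring
  refine ⟨fun Θ hne => ?_, hJstar⟩
  rw [hJ' Θ, hJstar]
  -- rewrite each summand via key
  have hRHS : ∑ k, c k * ∑ i, (G k i i * (Θ k i) ^ 2 - 2 * (G k * Sbar) i i * Θ k i)
      = (∑ k, c k * ∑ i, G k i i * (Θ k i - Θstar k i) ^ 2)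
        - ∑ k, c k * ∑ i, ((G k * Sbar) i i) ^ 2 / G k i i := by
    rw [← Finset.sum_sub_distrib]
    refine Finset.sum_congr rfl fun k _ => ?_
    rw [← mul_sub, ← Finset.sum_sub_distrib]
    congr 1
    exact Finset.sum_congr rfl fun i _ => key k (Θ k i) i
  rw [hRHS]
  have hpos : 0 < ∑ k, c k * ∑ i, G k i i * (Θ k i - Θstar k i) ^ 2 := by
    obtain ⟨k0, hk0⟩ : ∃ k, Θ k ≠ Θstar k := by
      by_contra h; push_neg at h; exact hne (funext h)
    obtain ⟨i0, hi0⟩ : ∃ i, Θ k0 i ≠ Θstar k0 i := by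
      by_contra h; push_neg at h; exact hk0 (funext h)
    have hinner : ∀ k, 0 ≤ ∑ i, G k i i * (Θ k i - Θstar k i) ^ 2 := fun k =>
      Finset.sum_nonneg fun i _ =>
        mul_nonneg (hGd k i).le (sq_nonneg _)
    refine Finset.sum_pos' (fun k _ => mul_nonneg (hcpos k).le (hinner k)) ⟨k0, Finset.mem_univ _, ?_⟩
    refine mul_pos (hcpos k0) ?_
    refine Finset.sum_pos' (fun i _ => mul_nonneg (hGd k0 i).le (sq_nonneg _))
      ⟨i0, Finset.mem_univ _, mul_pos (hGd k0 i0) (by have := sub_ne_zero_of_ne hi0; positivity)⟩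
  linarith
end

section
/- On a probability space, let S_0, S_1, …, S_{m−1} be independent, identically distributed integrable random N×N real symmetric matrices with common mean S̄ = E[S_t], such that all products appearing below are integrable. For 0 ≤ j ≤ m let Φ_{0:j−1} = S_{j−1} S_{j−2} ⋯ S_0 (with Φ_{0:−1} = I). Fix integers 0 ≤ l ≤ l' ≤ m and define the deterministic matrices M_0 = S̄^{l'−l} and M_j = E[S_0 M_{j−1} S_0] for j ≥ 1 (the expectation over a single fresh copy of the common distribution). Then E[ Φ_{0:l−1}ᵀ Φ_{0:l'−1} ] = M_l. -/
/-!
With `T_a = Φ_{a:l−1}ᵀ Φ_{a:l'−1}`, one shows `E[T_a] = M_{l−a}` by descending induction on `a`.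
Since `S_a` is symmetric and `a < l ≤ l'`, peeling off the first factor gives
`T_a = S_a T_{a+1} S_a`, where `T_{a+1}` is a function of `S_{a+1}, …, S_{m−1}` and hence
independent of `S_a`. Expanding entrywise, independence lets `T_{a+1}` be replaced by its mean
inside `E[S_a T_{a+1} S_a]`, and identical distribution replaces `S_a` by `S_0`. At `a = l`,
`T_l = Φ_{l:l'−1}`, whose mean `S̄^{l'−l}` follows from the same independence argument applied to
`Φ_{a:b−1} = Φ_{a+1:b−1} S_a`.
-/

open MeasureTheory ProbabilityTheory Matrix

/-- The (entrywise) measurable space structure on real matrices. -/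
instance matMS {N : ℕ} : MeasurableSpace (Matrix (Fin N) (Fin N) ℝ) :=
  (inferInstance : MeasurableSpace (Fin N → Fin N → ℝ))

/-- Entrywise expectation of a random matrix. -/
noncomputable def mExp {Ω : Type} [MeasurableSpace Ω] {N : ℕ} (μ : Measure Ω)
    (X : Ω → Matrix (Fin N) (Fin N) ℝ) : Matrix (Fin N) (Fin N) ℝ :=
  Matrix.of fun i j => ∫ ω, X ω i j ∂μ

/-- The left-continued matrix product `Φ_{a:b−1} = S_{b−1} S_{b−2} ⋯ S_a`
(equal to `I` when `b ≤ a`). -/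
def phiProd {Ω : Type} {N : ℕ} (S : ℕ → Ω → Matrix (Fin N) (Fin N) ℝ) (a b : ℕ) (ω : Ω) :
    Matrix (Fin N) (Fin N) ℝ :=
  (((List.range (b - a)).reverse).map (fun j => S (a + j) ω)).prod

theorem ProbabilityTheory.iIndepFun.indepFun_of_measurable_biSup {Ω ι γ : Type*}
    [MeasurableSpace Ω] {μ : Measure Ω} {β : ι → Type*} [m : ∀ i, MeasurableSpace (β i)]
    {X : ∀ i, Ω → β i} (h : iIndepFun X μ) (hX : ∀ i, Measurable (X i)) {i : ι} {J : Set ι}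
    (hi : i ∉ J) [MeasurableSpace γ] {T : Ω → γ}
    (hT : Measurable[⨆ j ∈ J, (m j).comap (X j)] T) : IndepFun (X i) T μ := by
  have hindep := indep_iSup_of_disjoint (fun j => (hX j).comap_le)
    ((iIndepFun_iff_iIndep _ _ _).1 h) (Set.disjoint_singleton_left.2 hi)
  rw [IndepFun_iff_Indep]
  refine indep_of_indep_of_le_left (indep_of_indep_of_le_right hindep hT.comap_le) ?_
  exact le_iSup₂ (f := fun j (_ : j ∈ ({i} : Set ι)) => (m j).comap (X j)) i rfl

theorem ProbabilityTheory.IndepFun.integrable_fun_mul {Ω : Type*} [MeasurableSpace Ω]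
    {μ : Measure Ω} {X Y : Ω → ℝ} (h : IndepFun X Y μ) (hX : Integrable X μ)
    (hY : Integrable Y μ) : Integrable (fun ω => X ω * Y ω) μ :=
  h.integrable_mul hX hY

section MatrixMeasurability

variable {N : ℕ}

theorem measurable_matrix_entry (i j : Fin N) :
    Measurable fun A : Matrix (Fin N) (Fin N) ℝ => A i j :=
  (measurable_pi_apply j).comp (measurable_pi_apply i)

theorem measurable_matrix_transpose :
    Measurable fun A : Matrix (Fin N) (Fin N) ℝ => Aᵀ :=
  measurable_pi_lambda _ fun j => measurable_pi_lambda _ fun i => measurable_matrix_entry i j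

instance : MeasurableMul₂ (Matrix (Fin N) (Fin N) ℝ) where
  measurable_mul := by
    refine measurable_pi_lambda _ fun i => measurable_pi_lambda _ fun j => ?_
    simp only [Matrix.mul_apply]
    exact Finset.measurable_sum _ fun k _ =>
      ((measurable_matrix_entry i k).comp measurable_fst).mul
        ((measurable_matrix_entry k j).comp measurable_snd)

end MatrixMeasurability

section MatrixExpectation

variable {Ω : Type} [MeasurableSpace Ω] {μ : Measure Ω} {N : ℕ}

def EntrywiseIntegrable (X : Ω → Matrix (Fin N) (Fin N) ℝ) (μ : Measure Ω) : Prop :=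
  ∀ i j, Integrable (fun ω => X ω i j) μ

@[simp]
theorem mExp_apply (X : Ω → Matrix (Fin N) (Fin N) ℝ) (i j : Fin N) :
    mExp μ X i j = ∫ ω, X ω i j ∂μ := rfl

theorem mExp_const [IsProbabilityMeasure μ] (C : Matrix (Fin N) (Fin N) ℝ) :
    mExp μ (fun _ => C) = C := by
  ext i j
  simp

theorem entrywiseIntegrable_const [IsFiniteMeasure μ] (C : Matrix (Fin N) (Fin N) ℝ) :
    EntrywiseIntegrable (fun _ => C) μ :=
  fun _ _ => integrable_const _

theorem ProbabilityTheory.IdentDistrib.mExp_eq {Ω' : Type} [MeasurableSpace Ω'] {ν : Measure Ω'}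
    {X : Ω → Matrix (Fin N) (Fin N) ℝ} {Y : Ω' → Matrix (Fin N) (Fin N) ℝ}
    (h : IdentDistrib X Y μ ν) : mExp μ X = mExp ν Y := by
  ext i j
  exact (h.comp (measurable_matrix_entry i j)).integral_eq

variable {X Y : Ω → Matrix (Fin N) (Fin N) ℝ}

theorem EntrywiseIntegrable.mul_of_indepFun (h : IndepFun X Y μ) (hX : EntrywiseIntegrable X μ)
    (hY : EntrywiseIntegrable Y μ) : EntrywiseIntegrable (fun ω => X ω * Y ω) μ := by
  intro i j
  simp only [Matrix.mul_apply]
  exact integrable_finsetSum _ fun k _ =>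
    (h.comp (measurable_matrix_entry i k) (measurable_matrix_entry k j)).integrable_fun_mul
      (hX i k) (hY k j)

theorem mExp_mul_of_indepFun (h : IndepFun X Y μ) (hX : EntrywiseIntegrable X μ)
    (hY : EntrywiseIntegrable Y μ) : mExp μ (fun ω => X ω * Y ω) = mExp μ X * mExp μ Y := by
  ext i j
  have hXY (k : Fin N) : IndepFun (fun ω => X ω i k) (fun ω => Y ω k j) μ :=
    h.comp (measurable_matrix_entry i k) (measurable_matrix_entry k j)
  simp only [mExp_apply, Matrix.mul_apply]
  rw [integral_finsetSum _ fun k _ => (hXY k).integrable_fun_mul (hX i k) (hY k j)]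
  exact Finset.sum_congr rfl fun k _ => (hXY k).integral_fun_mul_eq_mul_integral
    (hX i k).aestronglyMeasurable (hY k j).aestronglyMeasurable

theorem sandwich_apply (A B : Matrix (Fin N) (Fin N) ℝ) (i j : Fin N) :
    (A * B * A) i j = ∑ p, ∑ q, A i p * A q j * B p q := by
  simp only [Matrix.mul_apply, Finset.sum_mul]
  rw [Finset.sum_comm]
  exact Finset.sum_congr rfl fun q _ => Finset.sum_congr rfl fun p _ => by ring

theorem measurable_sandwich (C : Matrix (Fin N) (Fin N) ℝ) :
    Measurable fun A : Matrix (Fin N) (Fin N) ℝ => A * C * A :=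
  (measurable_id.mul measurable_const).mul measurable_id

variable {S : Ω → Matrix (Fin N) (Fin N) ℝ}

theorem EntrywiseIntegrable.sandwich_of_indepFun (h : IndepFun S X μ)
    (hS : ∀ i p q j, Integrable (fun ω => S ω i p * S ω q j) μ) (hX : EntrywiseIntegrable X μ) :
    EntrywiseIntegrable (fun ω => S ω * X ω * S ω) μ := by
  intro i j
  simp only [sandwich_apply]
  exact integrable_finsetSum _ fun p _ => integrable_finsetSum _ fun q _ =>
    (h.comp ((measurable_matrix_entry i p).mul (measurable_matrix_entry q j))
      (measurable_matrix_entry p q)).integrable_fun_mul (hS i p q j) (hX p q)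

theorem integral_sandwich_apply_of_indepFun (h : IndepFun S X μ)
    (hS : ∀ i p q j, Integrable (fun ω => S ω i p * S ω q j) μ) (hX : EntrywiseIntegrable X μ)
    (i j : Fin N) :
    ∫ ω, (S ω * X ω * S ω) i j ∂μ
      = ∑ p, ∑ q, (∫ ω, S ω i p * S ω q j ∂μ) * ∫ ω, X ω p q ∂μ := by
  have hSX (p q : Fin N) : IndepFun (fun ω => S ω i p * S ω q j) (fun ω => X ω p q) μ :=
    h.comp ((measurable_matrix_entry i p).mul (measurable_matrix_entry q j))
      (measurable_matrix_entry p q)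
  simp only [sandwich_apply]
  rw [integral_finsetSum _ fun p _ => integrable_finsetSum _ fun q _ =>
    (hSX p q).integrable_fun_mul (hS i p q j) (hX p q)]
  refine Finset.sum_congr rfl fun p _ => ?_
  rw [integral_finsetSum _ fun q _ => (hSX p q).integrable_fun_mul (hS i p q j) (hX p q)]
  exact Finset.sum_congr rfl fun q _ => (hSX p q).integral_fun_mul_eq_mul_integral
    (hS i p q j).aestronglyMeasurable (hX p q).aestronglyMeasurable

theorem mExp_sandwich_of_indepFun [IsProbabilityMeasure μ] (h : IndepFun S X μ)
    (hS : ∀ i p q j, Integrable (fun ω => S ω i p * S ω q j) μ) (hX : EntrywiseIntegrable X μ) :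
    mExp μ (fun ω => S ω * X ω * S ω) = mExp μ (fun ω => S ω * mExp μ X * S ω) := by
  ext i j
  simp only [mExp_apply]
  rw [integral_sandwich_apply_of_indepFun h hS hX,
    integral_sandwich_apply_of_indepFun (indepFun_const_right S (mExp μ X)) hS
      (entrywiseIntegrable_const _)]
  simp

end MatrixExpectation

section PhiProd

variable {Ω : Type} {N : ℕ} (S : ℕ → Ω → Matrix (Fin N) (Fin N) ℝ)

theorem phiProd_of_le {a b : ℕ} (h : b ≤ a) (ω : Ω) : phiProd S a b ω = 1 := by
  simp [phiProd, Nat.sub_eq_zero_of_le h]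

theorem phiProd_eq_mul {a b : ℕ} (h : a < b) (ω : Ω) :
    phiProd S a b ω = phiProd S (a + 1) b ω * S a ω := by
  obtain ⟨k, hk⟩ : ∃ k, b - a = k + 1 := ⟨b - a - 1, by omega⟩
  have hk' : b - (a + 1) = k := by omega
  simp only [phiProd, hk, hk', List.range_succ_eq_map, List.reverse_cons, List.map_append,
    List.prod_append, List.map_cons, List.map_nil, List.prod_cons, List.prod_nil, mul_one,
    List.map_reverse, List.map_map, Function.comp_def, Nat.succ_eq_add_one, add_zero]
  simp only [add_assoc, add_comm 1]

theorem measurable_phiProd {m𝓕 : MeasurableSpace Ω} {a b : ℕ}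
    (hS : ∀ j, a ≤ j → j < b → Measurable[m𝓕] (S j)) : Measurable[m𝓕] (phiProd S a b) := by
  induction hn : b - a generalizing a with
  | zero =>
    rw [funext (phiProd_of_le S (by omega))]
    exact measurable_const
  | succ n ih =>
    rw [funext (phiProd_eq_mul S (by omega : a < b))]
    exact (ih (fun j hj hjb => hS j (by omega) hjb) (by omega)).mul (hS a le_rfl (by omega))

end PhiProd

section IIDProducts

variable {Ω : Type} {N m : ℕ} {S : ℕ → Ω → Matrix (Fin N) (Fin N) ℝ}

abbrev sigmaAfter (m : ℕ) (S : ℕ → Ω → Matrix (Fin N) (Fin N) ℝ) (a : ℕ) : MeasurableSpace Ω :=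
  ⨆ τ ∈ {τ : Fin m | a < (τ : ℕ)}, matMS.comap (S τ)

theorem measurable_sigmaAfter {a τ : ℕ} (haτ : a < τ) (hτ : τ < m) :
    Measurable[sigmaAfter m S a] (S τ) :=
  Measurable.of_comap_le <| le_iSup₂
    (f := fun (σ : Fin m) (_ : σ ∈ {σ : Fin m | a < (σ : ℕ)}) => matMS.comap (S σ))
    (⟨τ, hτ⟩ : Fin m) haτ

theorem measurable_sigmaAfter_phiProd {a b c : ℕ} (hab : a < b) (hcm : c ≤ m) :
    Measurable[sigmaAfter m S a] (phiProd S b c) :=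
  measurable_phiProd S fun _ hbj hjc => measurable_sigmaAfter (by omega) (by omega)

variable [MeasurableSpace Ω] {μ : Measure Ω}

theorem indepFun_of_measurable_sigmaAfter
    (hIndep : iIndepFun (m := fun _ : Fin m => matMS) (fun τ : Fin m => S τ) μ)
    (hmeas : ∀ τ < m, Measurable (S τ)) {a : ℕ} (ha : a < m) {γ : Type*} [MeasurableSpace γ]
    {T : Ω → γ} (hT : Measurable[sigmaAfter m S a] T) : IndepFun (S a) T μ :=
  hIndep.indepFun_of_measurable_biSup (i := ⟨a, ha⟩) (fun τ => hmeas τ τ.2) (lt_irrefl a) hT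

theorem integrable_entry_pow_mul_entry_pow
    (hInt : ∀ (a b c d : ℕ → Fin N) (e f : ℕ → ℕ),
      Integrable (fun ω => ∏ τ ∈ Finset.range m,
        (S τ ω (a τ) (b τ)) ^ (e τ) * (S τ ω (c τ) (d τ)) ^ (f τ)) μ)
    {τ : ℕ} (hτ : τ < m) (i p q j : Fin N) (e f : ℕ) :
    Integrable (fun ω => S τ ω i p ^ e * S τ ω q j ^ f) μ := by
  refine (hInt (fun _ => i) (fun _ => p) (fun _ => q) (fun _ => j)
    (fun t => if t = τ then e else 0) (fun t => if t = τ then f else 0)).congr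
    (Filter.Eventually.of_forall fun ω => ?_)
  dsimp only
  rw [Finset.prod_eq_single_of_mem τ (Finset.mem_range.2 hτ) fun t _ ht => by simp [ht]]
  simp

variable [IsProbabilityMeasure μ]

theorem mExp_phiProd
    (hIndep : iIndepFun (m := fun _ : Fin m => matMS) (fun τ : Fin m => S τ) μ)
    (hmeas : ∀ τ < m, Measurable (S τ)) (hS : ∀ τ < m, EntrywiseIntegrable (S τ) μ)
    {Sbar : Matrix (Fin N) (Fin N) ℝ} (hSbar : ∀ τ < m, mExp μ (S τ) = Sbar) {a b : ℕ} (hab : a ≤ b) (hbm : b ≤ m) :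
    EntrywiseIntegrable (phiProd S a b) μ ∧ mExp μ (phiProd S a b) = Sbar ^ (b - a) := by
  induction hab using Nat.decreasingInduction with
  | self =>
    simp only [funext (phiProd_of_le S le_rfl), Nat.sub_self, pow_zero]
    exact ⟨entrywiseIntegrable_const 1, mExp_const 1⟩
  | of_succ a hab ih =>
    have hind : IndepFun (phiProd S (a + 1) b) (S a) μ :=
      (indepFun_of_measurable_sigmaAfter hIndep hmeas (by omega)
        (measurable_sigmaAfter_phiProd (Nat.lt_succ_self a) hbm)).symm
    have hSa := hS a (by omega)
    rw [funext (phiProd_eq_mul S hab)]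
    refine ⟨ih.1.mul_of_indepFun hind hSa, ?_⟩
    rw [mExp_mul_of_indepFun hind ih.1 hSa, ih.2, hSbar a (by omega), ← pow_succ,
      show b - (a + 1) + 1 = b - a by omega]

theorem mExp_transpose_phiProd_mul_phiProd
    (hIndep : iIndepFun (m := fun _ : Fin m => matMS) (fun τ : Fin m => S τ) μ)
    (hmeas : ∀ τ < m, Measurable (S τ)) (hS : ∀ τ < m, EntrywiseIntegrable (S τ) μ)
    {Sbar : Matrix (Fin N) (Fin N) ℝ} (hSbar : ∀ τ < m, mExp μ (S τ) = Sbar) (hsymm : ∀ τ < m, ∀ ω, (S τ ω).IsSymm)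
    (hS₂ : ∀ τ < m, ∀ i p q j, Integrable (fun ω => S τ ω i p * S τ ω q j) μ)
    (hid : ∀ τ < m, IdentDistrib (S τ) (S 0) μ μ) {l l' : ℕ} (hll' : l ≤ l') (hl'm : l' ≤ m)
    {M : ℕ → Matrix (Fin N) (Fin N) ℝ} (hM0 : M 0 = Sbar ^ (l' - l))
    (hMrec : ∀ j, M (j + 1) = mExp μ (fun ω => S 0 ω * M j * S 0 ω)) {a : ℕ} (ha : a ≤ l) :
    EntrywiseIntegrable (fun ω => (phiProd S a l ω)ᵀ * phiProd S a l' ω) μ ∧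
      mExp μ (fun ω => (phiProd S a l ω)ᵀ * phiProd S a l' ω) = M (l - a) := by
  induction ha using Nat.decreasingInduction with
  | self =>
    simp only [phiProd_of_le S le_rfl, transpose_one, one_mul, Nat.sub_self, hM0]
    exact mExp_phiProd hIndep hmeas hS hSbar hll' hl'm
  | of_succ a hal ih =>
    have hsandwich : (fun ω => (phiProd S a l ω)ᵀ * phiProd S a l' ω) = fun ω =>
        S a ω * ((phiProd S (a + 1) l ω)ᵀ * phiProd S (a + 1) l' ω) * S a ω := by
      funext ω
      rw [phiProd_eq_mul S hal, phiProd_eq_mul S (hal.trans_le hll'), transpose_mul,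
        (hsymm a (by omega) ω).eq]
      simp only [Matrix.mul_assoc]
    have hind : IndepFun (S a)
        (fun ω => (phiProd S (a + 1) l ω)ᵀ * phiProd S (a + 1) l' ω) μ :=
      indepFun_of_measurable_sigmaAfter hIndep hmeas (by omega)
        ((measurable_matrix_transpose.comp
          (measurable_sigmaAfter_phiProd (Nat.lt_succ_self a) (by omega))).mul
          (measurable_sigmaAfter_phiProd (Nat.lt_succ_self a) hl'm))
    have hSa := hS₂ a (by omega)
    rw [hsandwich]
    refine ⟨ih.1.sandwich_of_indepFun hind hSa, ?_⟩
    rw [mExp_sandwich_of_indepFun hind hSa ih.1, ih.2, show l - a = l - (a + 1) + 1 by omega,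
      hMrec]
    exact ((hid a (by omega)).comp (measurable_sandwich _)).mExp_eq

end IIDProducts

theorem stmt9_general {Ω : Type} [MeasurableSpace Ω] (μ : Measure Ω) [IsProbabilityMeasure μ]
    {N : ℕ} (m : ℕ) (S : ℕ → Ω → Matrix (Fin N) (Fin N) ℝ)
    (hmeas : ∀ τ < m, Measurable (S τ))
    (hsymm : ∀ τ < m, ∀ ω, (S τ ω).IsSymm)
    (hInt : ∀ (a b c d : ℕ → Fin N) (e f : ℕ → ℕ),
      Integrable (fun ω => ∏ τ ∈ Finset.range m,
        (S τ ω (a τ) (b τ)) ^ (e τ) * (S τ ω (c τ) (d τ)) ^ (f τ)) μ)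
    (hIndep : iIndepFun (m := fun _ : Fin m => matMS) (fun τ : Fin m => S τ) μ)
    (hid : ∀ τ < m, ∀ τ' < m, IdentDistrib (S τ) (S τ') μ μ)
    (Sbar : Matrix (Fin N) (Fin N) ℝ) (hSbar : ∀ τ < m, mExp μ (S τ) = Sbar)
    (l l' : ℕ) (hll' : l ≤ l') (hl'm : l' ≤ m)
    (M : ℕ → Matrix (Fin N) (Fin N) ℝ)
    (hM0 : M 0 = Sbar ^ (l' - l))
    (hMrec : ∀ j, M (j + 1) = mExp μ (fun ω => S 0 ω * M j * S 0 ω)) :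
    mExp μ (fun ω => (phiProd S 0 l ω)ᵀ * phiProd S 0 l' ω) = M l := by
  have hS : ∀ τ < m, EntrywiseIntegrable (S τ) μ := fun τ hτ i j => by
    simpa using integrable_entry_pow_mul_entry_pow hInt hτ i j i j 1 0
  have hS₂ : ∀ τ < m, ∀ i p q j, Integrable (fun ω => S τ ω i p * S τ ω q j) μ :=
    fun τ hτ i p q j => by simpa using integrable_entry_pow_mul_entry_pow hInt hτ i p q j 1 1
  simpa using (mExp_transpose_phiProd_mul_phiProd hIndep hmeas hS hSbar hsymm hS₂
    (fun τ hτ => hid τ hτ 0 (by omega)) hll' hl'm hM0 hMrec (Nat.zero_le l)).2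

/-- recursive structure of `E[Φ_{0:l−1}ᵀ Φ_{0:l'−1}]`, Eq. (12).
For i.i.d. random symmetric matrices `S_0,…,S_{m−1}` with mean `S̄`, and the deterministic
recursion `M_0 = S̄^{l'−l}`, `M_j = E[S_0 M_{j−1} S_0]`, one has
`E[Φ_{0:l−1}ᵀ Φ_{0:l'−1}] = M_l` for all `0 ≤ l ≤ l' ≤ m`. -/
theorem stmt9 {Ω : Type} [MeasurableSpace Ω] (μ : Measure Ω) [IsProbabilityMeasure μ]
    {N : ℕ} (hN : 0 < N) (m : ℕ) (S : ℕ → Ω → Matrix (Fin N) (Fin N) ℝ)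
    (hmeas : ∀ τ < m, Measurable (S τ))
    (hsymm : ∀ τ < m, ∀ ω, (S τ ω).IsSymm)
    (hInt : ∀ (a b c d : ℕ → Fin N) (e f : ℕ → ℕ),
      Integrable (fun ω => ∏ τ ∈ Finset.range m,
        (S τ ω (a τ) (b τ)) ^ (e τ) * (S τ ω (c τ) (d τ)) ^ (f τ)) μ)
    (hIndep : iIndepFun (m := fun _ : Fin m => matMS) (fun τ : Fin m => S τ) μ)
    (hid : ∀ τ < m, ∀ τ' < m, IdentDistrib (S τ) (S τ') μ μ)
    (Sbar : Matrix (Fin N) (Fin N) ℝ) (hSbar : ∀ τ < m, mExp μ (S τ) = Sbar)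
    (l l' : ℕ) (hll' : l ≤ l') (hl'm : l' ≤ m)
    (M : ℕ → Matrix (Fin N) (Fin N) ℝ)
    (hM0 : M 0 = Sbar ^ (l' - l))
    (hMrec : ∀ j, M (j + 1) = mExp μ (fun ω => S 0 ω * M j * S 0 ω)) :
    mExp μ (fun ω => (phiProd S 0 l ω)ᵀ * phiProd S 0 l' ω) = M l :=
  stmt9_general μ m S hmeas hsymm hInt hIndep hid Sbar hSbar l l' hll' hl'm M hM0 hMrec
end
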